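/- arXiv:1204.5672 — 2 statements merged into one kernel-verified Lean document; each statement's English description precedes it below -/
import Mathlib

section
/- Let M be a preGarside monoid and let N be a parabolic submonoid of M. Then N has the confluence property in M. Moreover, each minimal R_N-class (respectively, each minimal L_N-class) has a unique representative: if gN and g'N are minimal R_N-classes and gN = g'N, then g = g' (and symmetrically for classes Ng). -/
/-!
Cancellativity and the norm make the units of `M` trivial, so a coset `gN` (or `Ng`) determines
`g`, and a reduction `gN ⟵ ghN` is exactly a step with `1 ≠ h ∈ N`; it strictly lowers the norm
of the representative, which gives termination. For local confluence, a class `cN` reducing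
to both `aN` and `bN` has `c = a h₁ = b h₂` with `h₁, h₂ ∈ N`; the right lcm `m = x h₁ = y h₂`
lies in `N` by parabolicity, hence so do `x` and `y` as `N` is special, and writing `c = d m`,
cancellation gives `a = d x` and `b = d y`, so both classes reduce to `dN`.
-/

namespace PG

variable {M : Type*} [Monoid M]

/-- `LDvd a b` : `a` left-divides `b`. -/
def LDvd (a b : M) : Prop := ∃ c, b = a * c

/-- `RDvd a b` : `a` right-divides `b`. -/
def RDvd (a b : M) : Prop := ∃ c, b = c * a

/-- A monoid is cancellative if `c * a * d = c * b * d` implies `a = b`. -/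
def IsCancellative (M : Type*) [Monoid M] : Prop :=
  ∀ a b c d : M, c * a * d = c * b * d → a = b

/-- A monoid is atomic if it admits a norm `ν : M → ℕ` with `ν a > 0` for `a ≠ 1`
and `ν (a * b) ≥ ν a + ν b`. -/
def IsAtomicMon (M : Type*) [Monoid M] : Prop :=
  ∃ ν : M → ℕ, (∀ a : M, a ≠ 1 → 0 < ν a) ∧ ∀ a b : M, ν a + ν b ≤ ν (a * b)

/-- `m` is the least common multiple of `a` and `b` for left-divisibility. -/
def IsLcmL (a b m : M) : Prop :=
  LDvd a m ∧ LDvd b m ∧ ∀ c : M, LDvd a c → LDvd b c → LDvd m c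

/-- `m` is the least common multiple of `a` and `b` for right-divisibility. -/
def IsLcmR (a b m : M) : Prop :=
  RDvd a m ∧ RDvd b m ∧ ∀ c : M, RDvd a c → RDvd b c → RDvd m c

/-- `d` is the greatest common left-divisor of `a` and `b`. -/
def IsGcdL (a b d : M) : Prop :=
  LDvd d a ∧ LDvd d b ∧ ∀ c : M, LDvd c a → LDvd c b → LDvd c d

/-- `d` is the greatest common right-divisor of `a` and `b`. -/
def IsGcdR (a b d : M) : Prop :=
  RDvd d a ∧ RDvd d b ∧ ∀ c : M, RDvd c a → RDvd c b → RDvd c d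

/-- A preGarside monoid: cancellative, atomic, and any two elements admitting a
common multiple (on the appropriate side) admit a least one. -/
def IsPreGarside (M : Type*) [Monoid M] : Prop :=
  IsCancellative M ∧ IsAtomicMon M ∧
    (∀ a b : M, (∃ c, LDvd a c ∧ LDvd b c) → ∃ m, IsLcmL a b m) ∧
    (∀ a b : M, (∃ c, RDvd a c ∧ RDvd b c) → ∃ m, IsLcmR a b m)

/-- A submonoid is special if it is closed under factors. -/
def IsSpecial (N : Submonoid M) : Prop := ∀ a b : M, a * b ∈ N → a ∈ N ∧ b ∈ N

/-- A (standard) parabolic submonoid: special and closed under all existing lcms. -/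
def IsParabolic (N : Submonoid M) : Prop :=
  IsSpecial N ∧ (∀ a b m : M, a ∈ N → b ∈ N → IsLcmL a b m → m ∈ N) ∧
    ∀ a b m : M, a ∈ N → b ∈ N → IsLcmR a b m → m ∈ N

/-- `b` is a factor of `a`. -/
def Factor (b a : M) : Prop := ∃ c d : M, a = c * b * d

/-- The set of factors of `a`. -/
def Factors (a : M) : Set M := {b | Factor b a}

/-- An element is balanced when its left-divisors and right-divisors coincide. -/
def IsBalanced (a : M) : Prop := {b : M | LDvd b a} = {b : M | RDvd b a}

/-- A Garside element: balanced, and its factors generate the monoid. -/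
def IsGarsideElt (Δ : M) : Prop := IsBalanced Δ ∧ Submonoid.closure (Factors Δ) = ⊤

/-- A Garside monoid: a preGarside monoid possessing a Garside element. -/
def IsGarside (M : Type*) [Monoid M] : Prop := IsPreGarside M ∧ ∃ Δ : M, IsGarsideElt Δ

/-- The factors of `a` computed inside the submonoid `N`. -/
def FactorsIn (N : Submonoid M) (a : M) : Set M :=
  {b | b ∈ N ∧ ∃ c ∈ N, ∃ d ∈ N, a = c * b * d}

/-- `Δ` is a Garside element of the submonoid `N`: it is balanced in `N` and its
factors in `N` generate `N`. -/
def IsGarsideEltIn (N : Submonoid M) (Δ : M) : Prop :=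
  Δ ∈ N ∧ ({b : M | b ∈ N ∧ ∃ c ∈ N, Δ = b * c} = {b : M | b ∈ N ∧ ∃ c ∈ N, Δ = c * b}) ∧
    Submonoid.closure (FactorsIn N Δ) = N

/-- The right coset `g * N` (an `R_N`-class). -/
def RCoset (N : Submonoid M) (g : M) : Set M := {x | ∃ h ∈ N, x = g * h}

/-- The left coset `N * g` (an `L_N`-class). -/
def LCoset (N : Submonoid M) (g : M) : Set M := {x | ∃ h ∈ N, x = h * g}

/-- `RReduces N B A` : the `R_N`-class `B` reduces in one step to the `R_N`-class `A`,
i.e. `A = g₁ N`, `B = g₂ N` with `g₂ ∈ g₁ N` and `g₁ ∉ g₂ N`. -/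
def RReduces (N : Submonoid M) (B A : Set M) : Prop :=
  ∃ g₁ g₂ : M, A = RCoset N g₁ ∧ B = RCoset N g₂ ∧ g₂ ∈ RCoset N g₁ ∧ g₁ ∉ RCoset N g₂

/-- `LReduces N B A` : the `L_N`-class `B` reduces in one step to the `L_N`-class `A`. -/
def LReduces (N : Submonoid M) (B A : Set M) : Prop :=
  ∃ g₁ g₂ : M, A = LCoset N g₁ ∧ B = LCoset N g₂ ∧ g₂ ∈ LCoset N g₁ ∧ g₁ ∉ LCoset N g₂

/-- `N` has the `R` confluence property: the reduction rule on `R_N`-classes is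
Noetherian and locally confluent. -/
def RConfluence (N : Submonoid M) : Prop :=
  (¬ ∃ f : ℕ → Set M, ∀ n : ℕ, RReduces N (f n) (f (n + 1))) ∧
    ∀ C A B : Set M, RReduces N C A → RReduces N C B →
      ∃ D : Set M, Relation.ReflTransGen (RReduces N) A D ∧
        Relation.ReflTransGen (RReduces N) B D

/-- `N` has the `L` confluence property. -/
def LConfluence (N : Submonoid M) : Prop :=
  (¬ ∃ f : ℕ → Set M, ∀ n : ℕ, LReduces N (f n) (f (n + 1))) ∧
    ∀ C A B : Set M, LReduces N C A → LReduces N C B →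
      ∃ D : Set M, Relation.ReflTransGen (LReduces N) A D ∧
        Relation.ReflTransGen (LReduces N) B D

/-- `N` has the confluence property. -/
def Confluence (N : Submonoid M) : Prop := RConfluence N ∧ LConfluence N

/-- The `R_N`-class `C` is minimal: whenever `g` represents `C` and `g = g' * h` with
`h ∈ N`, one has `g' N = C`. -/
def IsMinimalRCoset (N : Submonoid M) (C : Set M) : Prop :=
  (∃ g : M, C = RCoset N g) ∧
    ∀ g g' h : M, h ∈ N → C = RCoset N g → g = g' * h → RCoset N g' = C

/-- The `L_N`-class `C` is minimal. -/
def IsMinimalLCoset (N : Submonoid M) (C : Set M) : Prop :=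
  (∃ g : M, C = LCoset N g) ∧
    ∀ g g' h : M, h ∈ N → C = LCoset N g → g = h * g' → LCoset N g' = C

/-- The set of atoms of `M`. -/
def AtomSet (M : Type*) [Monoid M] : Set M :=
  {a | a ≠ 1 ∧ ∀ b c : M, a = b * c → b = 1 ∨ c = 1}

/-- `|x|` : the least number of factors of `Δ` needed to write `x` as a product. -/
noncomputable def lenFactors (Δ x : M) : ℕ :=
  sInf {k | ∃ l : List M, l.length = k ∧ (∀ y ∈ l, y ∈ Factors Δ) ∧ l.prod = x}

section Amalgam

variable {M₁ M₂ N : Type*} [Monoid M₁] [Monoid M₂] [Monoid N]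

/-- The congruence on the free product `M₁ ∗ M₂` identifying `ι₁ h` with `ι₂ h`
for every `h ∈ N`. -/
def amalgamCon (ι₁ : N →* M₁) (ι₂ : N →* M₂) : Con (Monoid.Coprod M₁ M₂) :=
  conGen fun a b => ∃ h : N, a = Monoid.Coprod.inl (ι₁ h) ∧ b = Monoid.Coprod.inr (ι₂ h)

/-- The amalgamated product `M₁ *_N M₂` : the pushout of `ι₁ : N →* M₁` and
`ι₂ : N →* M₂` in the category of monoids. -/
def Amalgam (ι₁ : N →* M₁) (ι₂ : N →* M₂) : Type _ := (amalgamCon ι₁ ι₂).Quotient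

instance (ι₁ : N →* M₁) (ι₂ : N →* M₂) : Monoid (Amalgam ι₁ ι₂) :=
  inferInstanceAs (Monoid (amalgamCon ι₁ ι₂).Quotient)

/-- The canonical morphism `M₁ →* M₁ *_N M₂`. -/
def amalgamInl (ι₁ : N →* M₁) (ι₂ : N →* M₂) : M₁ →* Amalgam ι₁ ι₂ :=
  (amalgamCon ι₁ ι₂).mk'.comp Monoid.Coprod.inl

/-- The canonical morphism `M₂ →* M₁ *_N M₂`. -/
def amalgamInr (ι₁ : N →* M₁) (ι₂ : N →* M₂) : M₂ →* Amalgam ι₁ ι₂ :=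
  (amalgamCon ι₁ ι₂).mk'.comp Monoid.Coprod.inr

end Amalgam

theorem IsCancellative.mul_left_cancel (hc : IsCancellative M) {a b c : M}
    (h : c * a = c * b) : a = b :=
  hc a b c 1 (by simpa using h)

theorem IsCancellative.mul_right_cancel (hc : IsCancellative M) {a b d : M}
    (h : a * d = b * d) : a = b :=
  hc a b 1 d (by simpa using h)

theorem IsAtomicMon.mul_eq_one (hA : IsAtomicMon M) {x y : M} :
    x * y = 1 ↔ x = 1 ∧ y = 1 := by
  refine ⟨fun h => ?_, fun ⟨hx, hy⟩ => by rw [hx, hy, mul_one]⟩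
  obtain ⟨ν, hpos, hadd⟩ := hA
  have hν1 : ν 1 = 0 := by simpa using hadd 1 1
  have hxy := hadd x y
  rw [h, hν1] at hxy
  constructor <;> by_contra hne
  exacts [absurd (hpos x hne) (by omega), absurd (hpos y hne) (by omega)]

theorem mem_rCoset_self (N : Submonoid M) (g : M) : g ∈ RCoset N g :=
  ⟨1, N.one_mem, (mul_one g).symm⟩

theorem mem_lCoset_self (N : Submonoid M) (g : M) : g ∈ LCoset N g :=
  ⟨1, N.one_mem, (one_mul g).symm⟩

section Cosets

variable (hc : IsCancellative M) (hA : IsAtomicMon M) {N : Submonoid M}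
include hc hA

theorem rCoset_injective : Function.Injective (RCoset N) := by
  intro g g' h
  obtain ⟨k, -, hk⟩ : g ∈ RCoset N g' := h ▸ mem_rCoset_self N g
  obtain ⟨k', -, hk'⟩ : g' ∈ RCoset N g := h.symm ▸ mem_rCoset_self N g'
  have hkk : k' * k = 1 := hc.mul_left_cancel (c := g) (by rw [mul_one, ← mul_assoc, ← hk', ← hk])
  rw [hk', (hA.mul_eq_one.1 hkk).1, mul_one]

theorem lCoset_injective : Function.Injective (LCoset N) := by
  intro g g' h
  obtain ⟨k, -, hk⟩ : g ∈ LCoset N g' := h ▸ mem_lCoset_self N g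
  obtain ⟨k', -, hk'⟩ : g' ∈ LCoset N g := h.symm ▸ mem_lCoset_self N g'
  have hkk : k * k' = 1 := hc.mul_right_cancel (d := g) (by rw [one_mul, mul_assoc, ← hk', ← hk])
  rw [hk', (hA.mul_eq_one.1 hkk).2, one_mul]

theorem rReduces_iff {A B : Set M} :
    RReduces N B A ↔ ∃ g, ∃ h ∈ N, h ≠ 1 ∧ A = RCoset N g ∧ B = RCoset N (g * h) := by
  constructor
  · rintro ⟨g, _, rfl, rfl, ⟨h, hN, rfl⟩, hg⟩
    refine ⟨g, h, hN, ?_, rfl, rfl⟩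
    rintro rfl
    exact hg (by simpa using mem_rCoset_self N g)
  · rintro ⟨g, h, hN, h1, rfl, rfl⟩
    refine ⟨g, g * h, rfl, rfl, ⟨h, hN, rfl⟩, ?_⟩
    rintro ⟨k, -, hk⟩
    have hhk : h * k = 1 := hc.mul_left_cancel (c := g) (by rw [← mul_assoc, ← hk, mul_one])
    exact h1 (hA.mul_eq_one.1 hhk).1

theorem lReduces_iff {A B : Set M} :
    LReduces N B A ↔ ∃ g, ∃ h ∈ N, h ≠ 1 ∧ A = LCoset N g ∧ B = LCoset N (h * g) := by
  constructor
  · rintro ⟨g, _, rfl, rfl, ⟨h, hN, rfl⟩, hg⟩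
    refine ⟨g, h, hN, ?_, rfl, rfl⟩
    rintro rfl
    exact hg (by simpa using mem_lCoset_self N g)
  · rintro ⟨g, h, hN, h1, rfl, rfl⟩
    refine ⟨g, h * g, rfl, rfl, ⟨h, hN, rfl⟩, ?_⟩
    rintro ⟨k, -, hk⟩
    have hkh : k * h = 1 := hc.mul_right_cancel (d := g) (by rw [mul_assoc, ← hk, one_mul])
    exact h1 (hA.mul_eq_one.1 hkh).2

theorem not_exists_rReduces_chain : ¬ ∃ f : ℕ → Set M, ∀ n, RReduces N (f n) (f (n + 1)) := by
  rintro ⟨f, hf⟩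
  choose g h hN h1 hsucc hself using fun n => (rReduces_iff hc hA).1 (hf n)
  have hstep (n : ℕ) : g (n + 1) * h (n + 1) = g n :=
    rCoset_injective hc hA ((hself (n + 1)).symm.trans (hsucc n))
  obtain ⟨ν, hpos, hadd⟩ := hA
  refine not_strictAnti_of_wellFoundedLT (ν ∘ g) (strictAnti_nat_of_succ_lt fun n => ?_)
  have := hadd (g (n + 1)) (h (n + 1))
  have := hpos _ (h1 (n + 1))
  simp only [Function.comp, ← hstep n]
  omega

theorem not_exists_lReduces_chain : ¬ ∃ f : ℕ → Set M, ∀ n, LReduces N (f n) (f (n + 1)) := by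
  rintro ⟨f, hf⟩
  choose g h hN h1 hsucc hself using fun n => (lReduces_iff hc hA).1 (hf n)
  have hstep (n : ℕ) : h (n + 1) * g (n + 1) = g n :=
    lCoset_injective hc hA ((hself (n + 1)).symm.trans (hsucc n))
  obtain ⟨ν, hpos, hadd⟩ := hA
  refine not_strictAnti_of_wellFoundedLT (ν ∘ g) (strictAnti_nat_of_succ_lt fun n => ?_)
  have := hadd (h (n + 1)) (g (n + 1))
  have := hpos _ (h1 (n + 1))
  simp only [Function.comp, ← hstep n]
  omega

theorem reflTransGen_rReduces_mul {d x : M} (hx : x ∈ N) :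
    Relation.ReflTransGen (RReduces N) (RCoset N (d * x)) (RCoset N d) := by
  rcases eq_or_ne x 1 with rfl | hx1
  · rw [mul_one]
  · exact .single ((rReduces_iff hc hA).2 ⟨d, x, hx, hx1, rfl, rfl⟩)

theorem reflTransGen_lReduces_mul {d x : M} (hx : x ∈ N) :
    Relation.ReflTransGen (LReduces N) (LCoset N (x * d)) (LCoset N d) := by
  rcases eq_or_ne x 1 with rfl | hx1
  · rw [one_mul]
  · exact .single ((lReduces_iff hc hA).2 ⟨d, x, hx, hx1, rfl, rfl⟩)

end Cosets

section Parabolic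

variable {N : Submonoid M} (hM : IsPreGarside M) (hN : IsParabolic N)
include hM hN

theorem IsParabolic.rConfluence : RConfluence N := by
  obtain ⟨hc, hA, -, hR⟩ := hM
  obtain ⟨hSp, -, hPR⟩ := hN
  refine ⟨not_exists_rReduces_chain hc hA, fun C A B hCA hCB => ?_⟩
  obtain ⟨a, h₁, hh₁, -, rfl, rfl⟩ := (rReduces_iff hc hA).1 hCA
  obtain ⟨b, h₂, hh₂, -, rfl, hC⟩ := (rReduces_iff hc hA).1 hCB
  have hab : a * h₁ = b * h₂ := rCoset_injective hc hA hC
  obtain ⟨m, ⟨x, hx⟩, ⟨y, hy⟩, hlcm⟩ := hR h₁ h₂ ⟨a * h₁, ⟨a, rfl⟩, ⟨b, hab⟩⟩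
  have hmN : m ∈ N := hPR _ _ _ hh₁ hh₂ ⟨⟨x, hx⟩, ⟨y, hy⟩, hlcm⟩
  obtain ⟨d, hd⟩ := hlcm (a * h₁) ⟨a, rfl⟩ ⟨b, hab⟩
  have had : a = d * x := hc.mul_right_cancel (by rw [hd, hx, mul_assoc])
  have hbd : b = d * y := hc.mul_right_cancel (by rw [← hab, hd, hy, mul_assoc])
  refine ⟨RCoset N d, ?_, ?_⟩
  · rw [had]; exact reflTransGen_rReduces_mul hc hA (hSp x h₁ (hx ▸ hmN)).1
  · rw [hbd]; exact reflTransGen_rReduces_mul hc hA (hSp y h₂ (hy ▸ hmN)).1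

theorem IsParabolic.lConfluence : LConfluence N := by
  obtain ⟨hc, hA, hL, -⟩ := hM
  obtain ⟨hSp, hPL, -⟩ := hN
  refine ⟨not_exists_lReduces_chain hc hA, fun C A B hCA hCB => ?_⟩
  obtain ⟨a, h₁, hh₁, -, rfl, rfl⟩ := (lReduces_iff hc hA).1 hCA
  obtain ⟨b, h₂, hh₂, -, rfl, hC⟩ := (lReduces_iff hc hA).1 hCB
  have hab : h₁ * a = h₂ * b := lCoset_injective hc hA hC
  obtain ⟨m, ⟨x, hx⟩, ⟨y, hy⟩, hlcm⟩ := hL h₁ h₂ ⟨h₁ * a, ⟨a, rfl⟩, ⟨b, hab⟩⟩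
  have hmN : m ∈ N := hPL _ _ _ hh₁ hh₂ ⟨⟨x, hx⟩, ⟨y, hy⟩, hlcm⟩
  obtain ⟨d, hd⟩ := hlcm (h₁ * a) ⟨a, rfl⟩ ⟨b, hab⟩
  have had : a = x * d := hc.mul_left_cancel (by rw [hd, hx, mul_assoc])
  have hbd : b = y * d := hc.mul_left_cancel (by rw [← hab, hd, hy, mul_assoc])
  refine ⟨LCoset N d, ?_, ?_⟩
  · rw [had]; exact reflTransGen_lReduces_mul hc hA (hSp h₁ x (hx ▸ hmN)).2
  · rw [hbd]; exact reflTransGen_lReduces_mul hc hA (hSp h₂ y (hy ▸ hmN)).2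

end Parabolic

/-- **Lemma 3.9.** A parabolic submonoid `N` of a preGarside monoid `M` has the
confluence property; moreover each minimal `R_N`-class (resp. `L_N`-class) has a
unique representative. -/
theorem lemma_3_9 {M : Type*} [Monoid M] (hM : IsPreGarside M) (N : Submonoid M)
    (hN : IsParabolic N) :
    Confluence N ∧
    (∀ C : Set M, IsMinimalRCoset N C → ∃! g : M, C = RCoset N g) ∧
    (∀ C : Set M, IsMinimalLCoset N C → ∃! g : M, C = LCoset N g) := by
  obtain ⟨hc, hA, -⟩ := id hM
  refine ⟨⟨hN.rConfluence hM, hN.lConfluence hM⟩, ?_, ?_⟩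
  · rintro C ⟨⟨g, rfl⟩, -⟩
    exact ⟨g, rfl, fun g' hg' => rCoset_injective hc hA hg'.symm⟩
  · rintro C ⟨⟨g, rfl⟩, -⟩
    exact ⟨g, rfl, fun g' hg' => lCoset_injective hc hA hg'.symm⟩

end PG
end

section
/- Let M be a Garside monoid with Garside element Δ, let N be a parabolic submonoid of M, and let Δ_N be the Garside element of N with Div(Δ_N) = Div(Δ) ∩ N. Then for every g ∈ G(M), the left coset g G(N) has a unique minimal element m_N(g) for the partial order ≤_N; furthermore, m_N(g) = φ_g(Δ_N^{|g|}). -/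
namespace PG

variable {M : Type*} [Monoid M]

section Groups

/-- `G`, together with `κ : M →* G`, is the enveloping group `G(M)` of the monoid `M`:
every monoid morphism from `M` to a group factors uniquely through `κ`. -/
def IsEnvelopingGroup (M : Type) [Monoid M] (G : Type) [Group G] (κ : M →* G) : Prop :=
  ∀ (H : Type) [Group H], ∀ f : M →* H, ∃! φ : G →* H, φ.comp κ = f

variable {G : Type*} [Group G]

/-- `(a, b)` is the (right) normal form of `g ∈ G(M)` : `g = a b⁻¹` with `a ∧_R b = 1`. -/
def NormalForm (κ : M →* G) (g : G) (a b : M) : Prop :=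
  g = κ a * (κ b)⁻¹ ∧ ∀ c : M, RDvd c a → RDvd c b → c = 1

/-- The relation `≤_N` on `G(M)` : for `g₁ = a₁ b₁⁻¹` and `g₂ = a₂ b₂⁻¹` in normal form,
`g₁ ≤_N g₂` iff there are `h₁, h₂ ∈ N` and `a ∈ M` with `a₂ = a₁ a`,
`h₂ b₂ = h₁ b₁ a` and `h₂ ∧_L h₁ = h₂ ∧_L (h₁ b₁)`. -/
def leN (κ : M →* G) (N : Submonoid M) (g₁ g₂ : G) : Prop :=
  ∃ a₁ b₁ a₂ b₂ : M, NormalForm κ g₁ a₁ b₁ ∧ NormalForm κ g₂ a₂ b₂ ∧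
    ∃ h₁ ∈ N, ∃ h₂ ∈ N, ∃ a : M, a₂ = a₁ * a ∧ h₂ * b₂ = h₁ * b₁ * a ∧
      ∃ d : M, IsGcdL h₂ h₁ d ∧ IsGcdL h₂ (h₁ * b₁) d

/-- `|g|` for `g ∈ G(M)` : the least number of factors of `Δ` and inverses of such
needed to write `g` as a product. -/
noncomputable def lenSimple (κ : M →* G) (Δ : M) (g : G) : ℕ :=
  sInf {k | ∃ l : List G, l.length = k ∧
    (∀ x ∈ l, ∃ d ∈ Factors Δ, x = κ d ∨ x = (κ d)⁻¹) ∧ l.prod = g}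

/-- `PhiSpec κ Δ ΔN g h m` : `m = φ_g(h)`, where, for `g` with normal form `a b⁻¹`,
`φ_g(h) = a (a ∧_R (h b))⁻¹ (M_N(h b (a ∧_R (h b))⁻¹))⁻¹` and
`M_N(x) = (x ∧_L Δ_N^{|x|})⁻¹ x`. -/
def PhiSpec (κ : M →* G) (Δ ΔN : M) (g : G) (h : M) (m : G) : Prop :=
  ∃ a b c y d z : M,
    NormalForm κ g a b ∧ IsGcdR a (h * b) c ∧ h * b = y * c ∧
    IsGcdL y (ΔN ^ lenFactors Δ y) d ∧ y = d * z ∧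
    m = κ a * (κ c)⁻¹ * (κ z)⁻¹

/-- The restriction of `κ : M →* G` to a submonoid `N`, seen as a morphism onto the
subgroup of `G` generated by the image of `N`. -/
def restrictHom (κ : M →* G) (N : Submonoid M) :
    ↥N →* ↥(Subgroup.closure (κ '' (N : Set M))) :=
  MonoidHom.codRestrict (κ.comp N.subtype) (Subgroup.closure (κ '' (N : Set M)))
    fun x => Subgroup.subset_closure ⟨(x : M), x.2, rfl⟩

end Groups

/-- The family of preGarside monoids of FC type: the smallest family of monoids
containing the Garside monoids and closed under amalgamated products over a common
parabolic submonoid (and under isomorphism). -/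
inductive IsFCType : (M : Type) → [_inst : Monoid M] → Prop where
  | garside : ∀ (M : Type) [Monoid M], IsGarside M → IsFCType M
  | amalgam : ∀ (M₁ M₂ N : Type) [Monoid M₁] [Monoid M₂] [Monoid N]
      (ι₁ : N →* M₁) (ι₂ : N →* M₂),
      Function.Injective ι₁ → Function.Injective ι₂ →
      IsParabolic (MonoidHom.mrange ι₁) → IsParabolic (MonoidHom.mrange ι₂) →
      IsFCType M₁ → IsFCType M₂ → IsFCType (Amalgam ι₁ ι₂)
  | congr : ∀ (M : Type) [Monoid M] (M' : Type) [Monoid M'],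
      (M ≃* M') → IsFCType M → IsFCType M'

/-!
Write `g = a b⁻¹` in normal form, `K = |g|`, `c = a ∧_R (Δ_N^K b)` with `a = a₀ c` and
`Δ_N^K b = y c`, and `y = d z` with `d = y ∧_L Δ_N^{|y|}`. Then `m = a₀ z⁻¹ = φ_g(Δ_N^K)` and
`g⁻¹ m = Δ_N^{-K} d ∈ G(N)`. The hypothesis `Div(Δ_N) = Div(Δ) ∩ N` means, through greedy
decompositions, that an element of `N` dividing `Δ^k` divides `Δ_N^k`. With `a ⪯ Δ^K` (a word of
length `K` for `g` yields a fraction with numerator dividing `Δ^K`) this gives: `a₀` and `n z` are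
right-coprime for every `n ∈ N`, and no nontrivial element of `N` left-divides `z`. These two facts
make `m ≤_N x` for every `x ∈ m G(N)`; as `≤_N` is antisymmetric, `m` is the unique minimal
element of the coset.
-/

theorem LDvd.refl (a : M) : LDvd a a := ⟨1, (mul_one a).symm⟩

theorem LDvd.trans {a b c : M} : LDvd a b → LDvd b c → LDvd a c
  | ⟨u, hu⟩, ⟨v, hv⟩ => ⟨u * v, by rw [hv, hu, mul_assoc]⟩

theorem LDvd.mul_right (a c : M) : LDvd a (a * c) := ⟨c, rfl⟩

theorem RDvd.trans {a b c : M} : RDvd a b → RDvd b c → RDvd a c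
  | ⟨u, hu⟩, ⟨v, hv⟩ => ⟨v * u, by rw [hv, hu, mul_assoc]⟩

theorem RDvd.mul_left (a c : M) : RDvd a (c * a) := ⟨c, rfl⟩

def LCoprime (a b : M) : Prop := ∀ t, LDvd t a → LDvd t b → t = 1

def RCoprime (a b : M) : Prop := ∀ t, RDvd t a → RDvd t b → t = 1

theorem RCoprime.isGcdR_one {a b : M} (h : RCoprime a b) : IsGcdR a b 1 :=
  ⟨⟨a, (mul_one a).symm⟩, ⟨b, (mul_one b).symm⟩,
    fun t hta htb => ⟨1, by rw [h t hta htb, mul_one]⟩⟩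

namespace IsPreGarside

variable {a b c d : M}

theorem cancel_left (hM : IsPreGarside M) (h : c * a = c * b) : a = b :=
  hM.1 a b c 1 (by simpa using h)

theorem cancel_right (hM : IsPreGarside M) (h : a * d = b * d) : a = b :=
  hM.1 a b 1 d (by simpa using h)

theorem eq_one_of_mul_eq_one (hM : IsPreGarside M) (h : a * b = 1) : a = 1 ∧ b = 1 := by
  obtain ⟨ν, hpos, hadd⟩ := hM.2.1
  have h1 := hadd 1 1
  have hab := hadd a b
  rw [mul_one] at h1
  rw [h] at hab
  exact ⟨by_contra fun ha => by have := hpos a ha; omega,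
    by_contra fun hb => by have := hpos b hb; omega⟩

theorem eq_one_of_mul_ldvd (hM : IsPreGarside M) (h : LDvd (a * b) a) : b = 1 := by
  obtain ⟨c, hc⟩ := h
  have hbc : b * c = 1 := hM.cancel_left (c := a) (by rw [mul_one, ← mul_assoc, ← hc])
  exact (hM.eq_one_of_mul_eq_one hbc).1

theorem eq_one_of_mul_rdvd (hM : IsPreGarside M) (h : RDvd (a * b) b) : a = 1 := by
  obtain ⟨c, hc⟩ := h
  have hca : c * a = 1 := hM.cancel_right (d := b) (by rw [one_mul, mul_assoc, ← hc])
  exact (hM.eq_one_of_mul_eq_one hca).2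

theorem rdvd_antisymm (hM : IsPreGarside M) (h₁ : RDvd a b) (h₂ : RDvd b a) : a = b := by
  obtain ⟨u, rfl⟩ := h₁
  rw [hM.eq_one_of_mul_rdvd h₂, one_mul]

/-- A common divisor of maximal norm is a greatest one, since its lcm with any other common
divisor is again a common divisor. -/
theorem exists_isGcdL (hM : IsPreGarside M) (a b : M) : ∃ d, IsGcdL a b d := by
  obtain ⟨ν, hpos, hadd⟩ := hM.2.1
  set S := {c | LDvd c a ∧ LDvd c b}
  have hbdd : BddAbove (ν '' S) :=
    ⟨ν a, by rintro _ ⟨c, ⟨⟨u, rfl⟩, -⟩, rfl⟩; exact (Nat.le_add_right _ _).trans (hadd c u)⟩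
  obtain ⟨_, ⟨d, ⟨hda, hdb⟩, rfl⟩, hmax⟩ :=
    hbdd.exists_isGreatest_of_nonempty ⟨ν 1, 1, ⟨⟨a, (one_mul a).symm⟩, ⟨b, (one_mul b).symm⟩⟩, rfl⟩
  refine ⟨d, hda, hdb, fun c hca hcb => ?_⟩
  obtain ⟨m, hcm, ⟨e, rfl⟩, hm⟩ := hM.2.2.1 c d ⟨a, hca, hda⟩
  have he : e = 1 := by
    by_contra he
    have := hmax ⟨d * e, ⟨hm a hca hda, hm b hcb hdb⟩, rfl⟩
    have := hadd d e
    have := hpos e he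
    omega
  simpa [he] using hcm

theorem exists_isGcdR (hM : IsPreGarside M) (a b : M) : ∃ d, IsGcdR a b d := by
  obtain ⟨ν, hpos, hadd⟩ := hM.2.1
  set S := {c | RDvd c a ∧ RDvd c b}
  have hbdd : BddAbove (ν '' S) :=
    ⟨ν a, by rintro _ ⟨c, ⟨⟨u, rfl⟩, -⟩, rfl⟩; exact (Nat.le_add_left _ _).trans (hadd u c)⟩
  obtain ⟨_, ⟨d, ⟨hda, hdb⟩, rfl⟩, hmax⟩ :=
    hbdd.exists_isGreatest_of_nonempty ⟨ν 1, 1, ⟨⟨a, (mul_one a).symm⟩, ⟨b, (mul_one b).symm⟩⟩, rfl⟩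
  refine ⟨d, hda, hdb, fun c hca hcb => ?_⟩
  obtain ⟨m, hcm, ⟨e, rfl⟩, hm⟩ := hM.2.2.2 c d ⟨a, hca, hda⟩
  have he : e = 1 := by
    by_contra he
    have := hmax ⟨e * d, ⟨hm a hca hda, hm b hcb hdb⟩, rfl⟩
    have := hadd e d
    have := hpos e he
    omega
  simpa [he] using hcm

theorem ldvd_of_mul_ldvd_mul (hM : IsPreGarside M) (h : LDvd (c * a) (c * b)) :
    LDvd a b := by
  obtain ⟨u, hu⟩ := h
  exact ⟨u, hM.cancel_left (by rw [hu, mul_assoc])⟩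

theorem rdvd_of_mul_rdvd_mul (hM : IsPreGarside M) (h : RDvd (a * c) (b * c)) :
    RDvd a b := by
  obtain ⟨u, hu⟩ := h
  exact ⟨u, hM.cancel_right (by rw [hu, mul_assoc])⟩

end IsPreGarside

namespace IsGcdR

variable {a b e : M}

theorem unique (hM : IsPreGarside M) {e' : M} (h : IsGcdR a b e) (h' : IsGcdR a b e') :
    e = e' :=
  hM.rdvd_antisymm (h'.2.2 e h.1 h.2.1) (h.2.2 e' h'.1 h'.2.1)

theorem mul_right (hM : IsPreGarside M) (h : IsGcdR a b e) (u : M) :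
    IsGcdR (a * u) (b * u) (e * u) := by
  obtain ⟨⟨a', rfl⟩, ⟨b', rfl⟩, hmax⟩ := h
  refine ⟨⟨a', by rw [mul_assoc]⟩, ⟨b', by rw [mul_assoc]⟩, fun c hca hcb => ?_⟩
  obtain ⟨L, hcL, ⟨w, rfl⟩, hL⟩ := hM.2.2.2 c u ⟨_, hca, RDvd.mul_left u _⟩
  have hwe : RDvd w e := hmax w
    (hM.rdvd_of_mul_rdvd_mul (hL _ hca (RDvd.mul_left u _)))
    (hM.rdvd_of_mul_rdvd_mul (hL _ hcb (RDvd.mul_left u _)))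
  obtain ⟨v, rfl⟩ := hwe
  exact hcL.trans ⟨v, mul_assoc v w u⟩

theorem rCoprime (hM : IsPreGarside M) (h : IsGcdR a b e) {a' b' : M} (ha : a = a' * e)
    (hb : b = b' * e) : RCoprime a' b' := by
  rintro t hta htb
  obtain ⟨x, rfl⟩ := hta
  obtain ⟨y, rfl⟩ := htb
  refine hM.eq_one_of_mul_rdvd (h.2.2 (t * e) ⟨x, ?_⟩ ⟨y, ?_⟩) <;> simp only [ha, hb, mul_assoc]

end IsGcdR

theorem IsGcdL.lCoprime {a b e : M} (hM : IsPreGarside M) (h : IsGcdL a b e) {a' b' : M}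
    (ha : a = e * a') (hb : b = e * b') : LCoprime a' b' := by
  rintro t hta htb
  obtain ⟨x, rfl⟩ := hta
  obtain ⟨y, rfl⟩ := htb
  refine hM.eq_one_of_mul_ldvd (h.2.2 (e * t) ⟨x, ?_⟩ ⟨y, ?_⟩) <;> simp only [ha, hb, mul_assoc]

theorem rdvd_of_mul_eq_mul_of_isGcdL (hM : IsPreGarside M) {p q r t D : M}
    (heq : q * t = p * r) (hD : IsGcdL q p D) (hD' : IsGcdL q (p * r) D) : RDvd r t := by
  obtain ⟨f, hf⟩ := (hD'.2.2 q (LDvd.refl q) ⟨t, heq.symm⟩).trans hD.2.1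
  exact ⟨f, hM.cancel_left (c := q) (by rw [heq, hf, mul_assoc])⟩

theorem IsSpecial.mem_of_ldvd {N : Submonoid M} {a x : M} (hN : IsSpecial N) (hx : x ∈ N)
    (h : LDvd a x) : a ∈ N := by
  obtain ⟨c, rfl⟩ := h
  exact (hN a c hx).1

theorem IsSpecial.mem_of_rdvd {N : Submonoid M} {a x : M} (hN : IsSpecial N) (hx : x ∈ N)
    (h : RDvd a x) : a ∈ N := by
  obtain ⟨c, rfl⟩ := h
  exact (hN c a hx).2

namespace IsGarsideEltIn

variable {N : Submonoid M} {Δ : M}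

theorem ldvd_iff_rdvd (hN : IsSpecial N) (hΔ : IsGarsideEltIn N Δ) {b : M} :
    LDvd b Δ ↔ RDvd b Δ := by
  have key := Set.ext_iff.mp hΔ.2.1 b
  constructor
  · rintro ⟨c, hc⟩
    obtain ⟨-, c', -, hc'⟩ := (key.mp ⟨hN.mem_of_ldvd hΔ.1 ⟨c, hc⟩,
      c, hN.mem_of_rdvd hΔ.1 ⟨b, hc⟩, hc⟩)
    exact ⟨c', hc'⟩
  · rintro ⟨c, hc⟩
    obtain ⟨-, c', -, hc'⟩ := (key.mpr ⟨hN.mem_of_rdvd hΔ.1 ⟨c, hc⟩,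
      c, hN.mem_of_ldvd hΔ.1 ⟨b, hc⟩, hc⟩)
    exact ⟨c', hc'⟩

theorem mem_factorsIn_iff (hN : IsSpecial N) (hΔ : IsGarsideEltIn N Δ) {b : M} :
    b ∈ FactorsIn N Δ ↔ LDvd b Δ := by
  constructor
  · rintro ⟨-, c, -, d, -, hcd⟩
    have hcb : RDvd b Δ := (RDvd.mul_left b c).trans ((hΔ.ldvd_iff_rdvd hN).mp ⟨d, hcd⟩)
    exact (hΔ.ldvd_iff_rdvd hN).mpr hcb
  · rintro ⟨c, hc⟩
    exact ⟨hN.mem_of_ldvd hΔ.1 ⟨c, hc⟩, 1, N.one_mem, c, hN.mem_of_rdvd hΔ.1 ⟨b, hc⟩,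
      by rw [one_mul, hc]⟩

theorem exists_list_prod_eq (hN : IsSpecial N) (hΔ : IsGarsideEltIn N Δ) {x : M} (hx : x ∈ N) :
    ∃ l : List M, (∀ s ∈ l, LDvd s Δ) ∧ l.prod = x := by
  rw [← hΔ.2.2] at hx
  obtain ⟨l, hl, rfl⟩ := Submonoid.exists_list_of_mem_closure hx
  exact ⟨l, fun s hs => (hΔ.mem_factorsIn_iff hN).mp (hl s hs), rfl⟩

theorem exists_mul_eq_delta_mul (hN : IsSpecial N) (hΔ : IsGarsideEltIn N Δ) {x : M} (hx : x ∈ N) :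
    ∃ y ∈ N, x * Δ = Δ * y := by
  obtain ⟨l, hl, rfl⟩ := hΔ.exists_list_prod_eq hN hx
  clear hx
  induction l with
  | nil => exact ⟨1, N.one_mem, by simp⟩
  | cons s l ih =>
    obtain ⟨y, hyN, hy⟩ := ih fun t ht => hl t (List.mem_cons_of_mem s ht)
    obtain ⟨v, hv⟩ := hl s List.mem_cons_self
    obtain ⟨t, ht⟩ := (hΔ.ldvd_iff_rdvd hN).mpr ⟨s, hv⟩
    refine ⟨t * y, N.mul_mem (hN.mem_of_rdvd hΔ.1 ⟨v, ht⟩) hyN, ?_⟩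
    have hs : s * Δ = Δ * t := by
      conv_lhs => rw [ht]
      rw [← mul_assoc, ← hv]
    rw [List.prod_cons, mul_assoc, hy, ← mul_assoc, hs, mul_assoc]

theorem exists_delta_mul_eq_mul (hN : IsSpecial N) (hΔ : IsGarsideEltIn N Δ) {x : M} (hx : x ∈ N) :
    ∃ y ∈ N, Δ * x = y * Δ := by
  obtain ⟨l, hl, rfl⟩ := hΔ.exists_list_prod_eq hN hx
  clear hx
  induction l with
  | nil => exact ⟨1, N.one_mem, by simp⟩
  | cons s l ih =>
    obtain ⟨y, hyN, hy⟩ := ih fun t ht => hl t (List.mem_cons_of_mem s ht)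
    obtain ⟨u, hu⟩ := (hΔ.ldvd_iff_rdvd hN).mp (hl s List.mem_cons_self)
    obtain ⟨w, hw⟩ := (hΔ.ldvd_iff_rdvd hN).mp ⟨s, hu⟩
    refine ⟨w * y, N.mul_mem (hN.mem_of_ldvd hΔ.1 ⟨u, hw⟩) hyN, ?_⟩
    have hs : Δ * s = w * Δ := by
      conv_lhs => rw [hw]
      rw [mul_assoc, ← hu]
    rw [List.prod_cons, ← mul_assoc, hs, mul_assoc, hy, ← mul_assoc]

theorem exists_mul_pow_eq_pow_mul (hN : IsSpecial N) (hΔ : IsGarsideEltIn N Δ) {x : M}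
    (hx : x ∈ N) (k : ℕ) : ∃ y ∈ N, x * Δ ^ k = Δ ^ k * y := by
  induction k generalizing x with
  | zero => exact ⟨x, hx, by simp⟩
  | succ k ih =>
    obtain ⟨y, hyN, hy⟩ := hΔ.exists_mul_eq_delta_mul hN hx
    obtain ⟨z, hzN, hz⟩ := ih hyN
    exact ⟨z, hzN, by rw [pow_succ', ← mul_assoc, hy, mul_assoc, hz, ← mul_assoc]⟩

theorem exists_pow_mul_eq_mul_pow (hN : IsSpecial N) (hΔ : IsGarsideEltIn N Δ) {x : M}
    (hx : x ∈ N) (k : ℕ) : ∃ y ∈ N, Δ ^ k * x = y * Δ ^ k := by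
  induction k generalizing x with
  | zero => exact ⟨x, hx, by simp⟩
  | succ k ih =>
    obtain ⟨y, hyN, hy⟩ := hΔ.exists_delta_mul_eq_mul hN hx
    obtain ⟨z, hzN, hz⟩ := ih hyN
    exact ⟨z, hzN, by rw [pow_succ, mul_assoc, hy, ← mul_assoc, hz, mul_assoc]⟩

theorem ldvd_pow_iff_rdvd_pow (hM : IsPreGarside M) (hN : IsSpecial N)
    (hΔ : IsGarsideEltIn N Δ) {x : M} {k : ℕ} : LDvd x (Δ ^ k) ↔ RDvd x (Δ ^ k) := by
  have hpow : Δ ^ k ∈ N := N.pow_mem hΔ.1 k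
  constructor
  · rintro ⟨u, hu⟩
    obtain ⟨v, -, hv⟩ := hΔ.exists_pow_mul_eq_mul_pow hN (hN.mem_of_rdvd hpow ⟨x, hu⟩) k
    exact ⟨v, hM.cancel_right (d := u) (by rw [hv, hu, mul_assoc])⟩
  · rintro ⟨w, hw⟩
    obtain ⟨v, -, hv⟩ := hΔ.exists_mul_pow_eq_pow_mul hN (hN.mem_of_ldvd hpow ⟨x, hw⟩) k
    exact ⟨v, hM.cancel_left (c := w) (by rw [hv, hw, mul_assoc])⟩

theorem mul_ldvd_pow_succ (hN : IsSpecial N) (hΔ : IsGarsideEltIn N Δ) {s x : M} {k : ℕ}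
    (hs : LDvd s Δ) (hx : LDvd x (Δ ^ k)) : LDvd (s * x) (Δ ^ (k + 1)) := by
  obtain ⟨v, hv⟩ := hs
  obtain ⟨u, hu⟩ := hx
  obtain ⟨w, -, hw⟩ := hΔ.exists_mul_pow_eq_pow_mul hN (hN.mem_of_rdvd hΔ.1 ⟨s, hv⟩) k
  refine ⟨u * w, ?_⟩
  rw [pow_succ']
  nth_rewrite 1 [hv]
  rw [mul_assoc, hw, hu]
  simp only [mul_assoc]

theorem list_prod_ldvd_pow (hN : IsSpecial N) (hΔ : IsGarsideEltIn N Δ) {l : List M}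
    (hl : ∀ s ∈ l, LDvd s Δ) : LDvd l.prod (Δ ^ l.length) := by
  induction l with
  | nil => exact ⟨1, by simp⟩
  | cons s l ih =>
    exact hΔ.mul_ldvd_pow_succ hN (hl s List.mem_cons_self)
      (ih fun t ht => hl t (List.mem_cons_of_mem s ht))

theorem exists_ldvd_pow (hN : IsSpecial N) (hΔ : IsGarsideEltIn N Δ) {x : M} (hx : x ∈ N) :
    ∃ k, LDvd x (Δ ^ k) := by
  obtain ⟨l, hl, rfl⟩ := hΔ.exists_list_prod_eq hN hx
  exact ⟨l.length, hΔ.list_prod_ldvd_pow hN hl⟩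

end IsGarsideEltIn

theorem isSpecial_top : IsSpecial (⊤ : Submonoid M) := fun _ _ _ => ⟨trivial, trivial⟩

theorem factorsIn_top (a : M) : FactorsIn ⊤ a = Factors a := by
  ext b
  simp [FactorsIn, Factors, Factor]

namespace IsGarsideElt

variable {Δ : M}

theorem isGarsideEltIn_top (hΔ : IsGarsideElt Δ) : IsGarsideEltIn ⊤ Δ :=
  ⟨trivial, by simpa [IsBalanced, LDvd, RDvd] using hΔ.1, by rw [factorsIn_top, hΔ.2]⟩

theorem mem_factors_iff (hΔ : IsGarsideElt Δ) {b : M} : b ∈ Factors Δ ↔ LDvd b Δ := by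
  rw [← factorsIn_top]
  exact hΔ.isGarsideEltIn_top.mem_factorsIn_iff isSpecial_top

theorem ldvd_pow_iff_rdvd_pow (hM : IsPreGarside M) (hΔ : IsGarsideElt Δ) {x : M} {k : ℕ} :
    LDvd x (Δ ^ k) ↔ RDvd x (Δ ^ k) :=
  hΔ.isGarsideEltIn_top.ldvd_pow_iff_rdvd_pow hM isSpecial_top

theorem exists_ldvd_pow (hΔ : IsGarsideElt Δ) (x : M) : ∃ k, LDvd x (Δ ^ k) :=
  hΔ.isGarsideEltIn_top.exists_ldvd_pow isSpecial_top trivial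

theorem exists_ldvd_pow_and_ldvd_pow (hΔ : IsGarsideElt Δ) (a b : M) :
    ∃ k, LDvd a (Δ ^ k) ∧ LDvd b (Δ ^ k) := by
  obtain ⟨i, ⟨u, hu⟩⟩ := hΔ.exists_ldvd_pow a
  obtain ⟨j, ⟨v, hv⟩⟩ := hΔ.exists_ldvd_pow b
  refine ⟨i + j, ⟨u * Δ ^ j, ?_⟩, ⟨v * Δ ^ i, ?_⟩⟩
  · rw [pow_add, hu, mul_assoc]
  · rw [add_comm, pow_add, hv, mul_assoc]

theorem exists_common_right_mul (hΔ : IsGarsideElt Δ) (a b : M) : ∃ u v, a * u = b * v := by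
  obtain ⟨k, ⟨u, hu⟩, ⟨v, hv⟩⟩ := hΔ.exists_ldvd_pow_and_ldvd_pow a b
  exact ⟨u, v, hu.symm.trans hv⟩

theorem exists_common_left_mul (hM : IsPreGarside M) (hΔ : IsGarsideElt Δ) (a b : M) :
    ∃ u v, u * a = v * b := by
  obtain ⟨k, ha, hb⟩ := hΔ.exists_ldvd_pow_and_ldvd_pow a b
  obtain ⟨u, hu⟩ := (hΔ.ldvd_pow_iff_rdvd_pow hM).mp ha
  obtain ⟨v, hv⟩ := (hΔ.ldvd_pow_iff_rdvd_pow hM).mp hb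
  exact ⟨u, v, hu.symm.trans hv⟩

theorem exists_isLcmL (hM : IsPreGarside M) (hΔ : IsGarsideElt Δ) (a b : M) :
    ∃ m, IsLcmL a b m := by
  obtain ⟨u, v, h⟩ := hΔ.exists_common_right_mul a b
  exact hM.2.2.1 a b ⟨a * u, ⟨u, rfl⟩, ⟨v, h⟩⟩

theorem exists_isLcmR (hM : IsPreGarside M) (hΔ : IsGarsideElt Δ) (a b : M) :
    ∃ m, IsLcmR a b m := by
  obtain ⟨u, v, h⟩ := hΔ.exists_common_left_mul hM a b
  exact hM.2.2.2 a b ⟨u * a, ⟨u, rfl⟩, ⟨v, h⟩⟩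

theorem ldvd_pow_lenFactors (hΔ : IsGarsideElt Δ) (x : M) :
    LDvd x (Δ ^ lenFactors Δ x) := by
  obtain ⟨l, hl, hprod⟩ := hΔ.isGarsideEltIn_top.exists_list_prod_eq isSpecial_top (x := x) trivial
  obtain ⟨l, hlen, hl, rfl⟩ := Nat.sInf_mem (s := {k | ∃ l : List M, l.length = k ∧
    (∀ y ∈ l, y ∈ Factors Δ) ∧ l.prod = x})
    ⟨l.length, l, rfl, fun s hs => hΔ.mem_factors_iff.mpr (hl s hs), hprod⟩
  rw [lenFactors, ← hlen]
  exact hΔ.isGarsideEltIn_top.list_prod_ldvd_pow isSpecial_top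
    fun s hs => hΔ.mem_factors_iff.mp (hl s hs)

end IsGarsideElt

section Greedy

variable {Δ : M}

/-- With `C = ξ ∨_L η = ξ λ = η θ` and `μ = C ∧_R Δ^k`, both `λ` and `θ` right-divide `μ`, so
`C μ⁻¹` is a common left divisor of `ξ` and `η`; hence `C = μ` divides `Δ^k`. -/
theorem ldvd_pow_of_ldvd_mul_pow (hM : IsPreGarside M) (hΔ : IsGarsideElt Δ) {ξ η : M} {k : ℕ}
    (hη : LDvd η Δ) (hco : LCoprime ξ η) (h : LDvd ξ (η * Δ ^ k)) :
    LDvd ξ (Δ ^ k) := by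
  rcases k with _ | k
  · obtain ⟨u, hu⟩ := h
    rw [hco ξ (LDvd.refl ξ) ⟨u, by simpa using hu⟩]
    exact ⟨1, by simp⟩
  obtain ⟨C, ⟨lam, hlam⟩, ⟨θ, hθ⟩, hC⟩ := hΔ.exists_isLcmL hM ξ η
  have hθk : LDvd θ (Δ ^ (k + 1)) :=
    hM.ldvd_of_mul_ldvd_mul (hθ ▸ hC _ h (LDvd.mul_right η _))
  have hlamk : LDvd lam (Δ ^ (k + 1)) := by
    obtain ⟨y, -, hy⟩ :=
      hΔ.isGarsideEltIn_top.exists_mul_eq_delta_mul isSpecial_top (x := ξ) trivial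
    have hlamΔ : LDvd lam Δ :=
      hM.ldvd_of_mul_ldvd_mul (hlam ▸ hC _ (LDvd.mul_right ξ Δ) (hη.trans ⟨y, hy⟩))
    exact hlamΔ.trans ⟨Δ ^ k, pow_succ' Δ k⟩
  obtain ⟨μ, ⟨L, hL⟩, hμ, hμmax⟩ := hM.exists_isGcdR C (Δ ^ (k + 1))
  obtain ⟨μ₁, hμ₁⟩ := hμmax lam ⟨ξ, hlam⟩ ((hΔ.ldvd_pow_iff_rdvd_pow hM).mp hlamk)
  obtain ⟨μ₂, hμ₂⟩ := hμmax θ ⟨η, hθ⟩ ((hΔ.ldvd_pow_iff_rdvd_pow hM).mp hθk)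
  have hL1 : L = 1 := hco L
    ⟨μ₁, hM.cancel_right (d := lam) (by rw [← hlam, hL, hμ₁, mul_assoc])⟩
    ⟨μ₂, hM.cancel_right (d := θ) (by rw [← hθ, hL, hμ₂, mul_assoc])⟩
  rw [hL1, one_mul] at hL
  exact LDvd.trans ⟨lam, hlam⟩ (hL ▸ (hΔ.ldvd_pow_iff_rdvd_pow hM).mpr hμ)

theorem exists_mul_of_ldvd_pow_succ (hM : IsPreGarside M) (hΔ : IsGarsideElt Δ) {x : M}
    {k : ℕ} (h : LDvd x (Δ ^ (k + 1))) : ∃ s y, LDvd s Δ ∧ x = s * y ∧ LDvd y (Δ ^ k) := by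
  obtain ⟨s, hs⟩ := hM.exists_isGcdL x Δ
  obtain ⟨y, hy⟩ := hs.1
  obtain ⟨t, ht⟩ := hs.2.1
  have htΔ : LDvd t Δ :=
    (hΔ.isGarsideEltIn_top.ldvd_iff_rdvd isSpecial_top).mpr ⟨s, ht⟩
  refine ⟨s, y, hs.2.1, hy, ldvd_pow_of_ldvd_mul_pow hM hΔ htΔ (hs.lCoprime hM hy ht) ?_⟩
  obtain ⟨u, hu⟩ := h
  exact ⟨u, hM.cancel_left (c := s) (by rw [← mul_assoc, ← ht, ← pow_succ', hu, hy, mul_assoc])⟩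

end Greedy

def IsLReduced (N : Submonoid M) (z : M) : Prop := ∀ n ∈ N, LDvd n z → n = 1

section Parabolic

variable {N : Submonoid M} {Δ ΔN : M}

/-- A common left divisor `t` of `h₂` and `h₁ z` lies in `N`, hence so does `t ∨_L h₁ = h₁ u`;
then `u` left-divides `z`, so `u = 1` and `t` left-divides `h₁`. -/
theorem IsGcdL.mul_right_of_isLReduced (hM : IsPreGarside M) (hΔ : IsGarsideElt Δ)
    (hN : IsParabolic N) {h₁ h₂ z D : M} (h₁N : h₁ ∈ N) (h₂N : h₂ ∈ N)
    (hz : IsLReduced N z) (hD : IsGcdL h₂ h₁ D) : IsGcdL h₂ (h₁ * z) D := by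
  refine ⟨hD.1, hD.2.1.trans (LDvd.mul_right h₁ z), fun t ht₂ ht₁ => hD.2.2 t ht₂ ?_⟩
  obtain ⟨m, hm⟩ := hΔ.exists_isLcmL hM t h₁
  have hmN : m ∈ N := hN.2.1 t h₁ m (hN.1.mem_of_ldvd h₂N ht₂) h₁N hm
  obtain ⟨u, rfl⟩ := hm.2.1
  have hu : u = 1 := hz u (hN.1.mem_of_rdvd hmN (RDvd.mul_left u h₁))
    (hM.ldvd_of_mul_ldvd_mul (hm.2.2 _ ht₁ (LDvd.mul_right h₁ z)))
  simpa [hu] using hm.1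

theorem ldvd_iff_of_factorsIn_eq (hN : IsSpecial N) (hΔ : IsGarsideElt Δ)
    (hΔN : IsGarsideEltIn N ΔN) (hdiv : FactorsIn N ΔN = Factors Δ ∩ (N : Set M)) {b : M}
    (hb : b ∈ N) : LDvd b ΔN ↔ LDvd b Δ := by
  rw [← hΔN.mem_factorsIn_iff hN, hdiv, ← hΔ.mem_factors_iff]
  exact ⟨And.left, fun h => ⟨h, hb⟩⟩

/-- Split `n` greedily into divisors of `Δ`; these lie in `N`, hence divide `Δ_N`. -/
theorem ldvd_powN_of_ldvd_pow (hM : IsPreGarside M) (hN : IsSpecial N) (hΔ : IsGarsideElt Δ)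
    (hΔN : IsGarsideEltIn N ΔN) (hdiv : FactorsIn N ΔN = Factors Δ ∩ (N : Set M)) {n : M}
    (hn : n ∈ N) {k : ℕ} (h : LDvd n (Δ ^ k)) : LDvd n (ΔN ^ k) := by
  induction k generalizing n with
  | zero => simpa using h
  | succ k ih =>
    obtain ⟨s, y, hs, rfl, hy⟩ := exists_mul_of_ldvd_pow_succ hM hΔ h
    have hsN : s ∈ N := hN.mem_of_ldvd hn (LDvd.mul_right s y)
    exact hΔN.mul_ldvd_pow_succ hN ((ldvd_iff_of_factorsIn_eq hN hΔ hΔN hdiv hsN).mpr hs)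
      (ih (hN.mem_of_rdvd hn (RDvd.mul_left y s)) hy)

theorem rdvd_powN_of_rdvd_pow (hM : IsPreGarside M) (hN : IsSpecial N) (hΔ : IsGarsideElt Δ)
    (hΔN : IsGarsideEltIn N ΔN) (hdiv : FactorsIn N ΔN = Factors Δ ∩ (N : Set M)) {n : M}
    (hn : n ∈ N) {k : ℕ} (h : RDvd n (Δ ^ k)) : RDvd n (ΔN ^ k) :=
  (hΔN.ldvd_pow_iff_rdvd_pow hM hN).mp
    (ldvd_powN_of_ldvd_pow hM hN hΔ hΔN hdiv hn ((hΔ.ldvd_pow_iff_rdvd_pow hM).mpr h))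

/-- The lcm `s ∨_R b = u b` right-divides both `Δ_N^{K'} b` and `Δ^K b`; hence `u ∈ N` and
`u` right-divides `Δ^K`, so also `Δ_N^K`. -/
theorem rdvd_powN_mul_of_rdvd (hM : IsPreGarside M) (hN : IsSpecial N) (hΔ : IsGarsideElt Δ)
    (hΔN : IsGarsideEltIn N ΔN) (hdiv : FactorsIn N ΔN = Factors Δ ∩ (N : Set M)) {s b : M}
    {K K' : ℕ} (hs : RDvd s (Δ ^ K)) (hs' : RDvd s (ΔN ^ K' * b)) : RDvd s (ΔN ^ K * b) := by
  obtain ⟨L, hsL, ⟨u, rfl⟩, hL⟩ := hΔ.exists_isLcmR hM s b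
  have huN : u ∈ N := hN.mem_of_rdvd (N.pow_mem hΔN.1 K')
    (hM.rdvd_of_mul_rdvd_mul (hL _ hs' (RDvd.mul_left b _)))
  obtain ⟨b', -, hb'⟩ := hΔ.isGarsideEltIn_top.exists_pow_mul_eq_mul_pow isSpecial_top
    (x := b) trivial K
  have hsb : RDvd s (Δ ^ K * b) := hb' ▸ hs.trans (RDvd.mul_left _ b')
  obtain ⟨v, hv⟩ := rdvd_powN_of_rdvd_pow hM hN hΔ hΔN hdiv huN
    (hM.rdvd_of_mul_rdvd_mul (hL _ hsb (RDvd.mul_left b _)))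
  exact hsL.trans ⟨v, by rw [hv, mul_assoc]⟩

theorem isLReduced_of_isGcdL_powN (hM : IsPreGarside M) (hN : IsSpecial N)
    (hΔ : IsGarsideElt Δ) (hΔN : IsGarsideEltIn N ΔN)
    (hdiv : FactorsIn N ΔN = Factors Δ ∩ (N : Set M)) {y d z : M} {k : ℕ}
    (hy : LDvd y (Δ ^ k)) (hd : IsGcdL y (ΔN ^ k) d) (hz : y = d * z) : IsLReduced N z := by
  rintro n hn ⟨z', rfl⟩
  have hdn : LDvd (d * n) y := ⟨z', by rw [hz, mul_assoc]⟩
  have hdnN : d * n ∈ N := N.mul_mem (hN.mem_of_ldvd (N.pow_mem hΔN.1 k) hd.2.1) hn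
  exact hM.eq_one_of_mul_ldvd
    (hd.2.2 _ hdn (ldvd_powN_of_ldvd_pow hM hN hΔ hΔN hdiv hdnN (hdn.trans hy)))

/-- If `t` right-divides `a₀` and `n z`, then `t c` right-divides `a` and `n z c`, hence
`Δ_N^{j+K} b` for `n ⪯_R Δ_N^j`; by `rdvd_powN_mul_of_rdvd` it right-divides `Δ_N^K b`, hence
`c = a ∧_R (Δ_N^K b)`, so `t = 1`. -/
theorem rCoprime_mul_of_isGcdR (hM : IsPreGarside M) (hN : IsSpecial N) (hΔ : IsGarsideElt Δ)
    (hΔN : IsGarsideEltIn N ΔN) (hdiv : FactorsIn N ΔN = Factors Δ ∩ (N : Set M))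
    {a b c a₀ d z : M} {K : ℕ} (ha : LDvd a (Δ ^ K)) (hc : IsGcdR a (ΔN ^ K * b) c)
    (ha₀ : a = a₀ * c) (hdz : ΔN ^ K * b = d * z * c) (hd : d ∈ N) :
    ∀ n ∈ N, RCoprime a₀ (n * z) := by
  rintro n hn t ⟨s, hs⟩ ⟨r, hr⟩
  obtain ⟨j, hj⟩ := hΔN.exists_ldvd_pow hN hn
  obtain ⟨w, hw⟩ := (hΔN.ldvd_pow_iff_rdvd_pow hM hN).mp hj
  obtain ⟨d', -, hd'⟩ := hΔN.exists_pow_mul_eq_mul_pow hN hd j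
  have hta : RDvd (t * c) a := ⟨s, by rw [ha₀, hs, mul_assoc]⟩
  have htb : RDvd (t * c) (ΔN ^ (j + K) * b) := by
    refine ⟨d' * w * r, ?_⟩
    rw [pow_add, mul_assoc, hdz, ← mul_assoc, ← mul_assoc, hd', hw]
    simp only [mul_assoc]
    rw [← mul_assoc n, hr]
    simp only [mul_assoc]
  exact hM.eq_one_of_mul_rdvd (hc.2.2 _ hta (rdvd_powN_mul_of_rdvd hM hN hΔ hΔN hdiv
    (hta.trans ((hΔ.ldvd_pow_iff_rdvd_pow hM).mp ha)) htb))

end Parabolic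

section Fractions

variable {G : Type*} [Group G] {κ : M →* G} {Δ : M} {N : Submonoid M} {g : G} {a b : M}

theorem NormalForm.exists_of_eq (hM : IsPreGarside M) (h : g = κ a * (κ b)⁻¹) :
    ∃ a₀ b₀ e, a = a₀ * e ∧ b = b₀ * e ∧ NormalForm κ g a₀ b₀ := by
  obtain ⟨e, he⟩ := hM.exists_isGcdR a b
  obtain ⟨a₀, ha₀⟩ := he.1
  obtain ⟨b₀, hb₀⟩ := he.2.1
  exact ⟨a₀, b₀, e, ha₀, hb₀, by rw [h, ha₀, hb₀, map_mul, map_mul]; group,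
    he.rCoprime hM ha₀ hb₀⟩

theorem exists_eq_mul_inv_ldvd_pow_length (hΔ : IsGarsideElt Δ) (l : List G)
    (hl : ∀ x ∈ l, ∃ d ∈ Factors Δ, x = κ d ∨ x = (κ d)⁻¹) :
    ∃ a b, l.prod = κ a * (κ b)⁻¹ ∧ LDvd a (Δ ^ l.length) := by
  induction l with
  | nil => exact ⟨1, 1, by simp, ⟨1, by simp⟩⟩
  | cons x l ih =>
    obtain ⟨a, b, hab, ha⟩ := ih fun y hy => hl y (List.mem_cons_of_mem x hy)
    obtain ⟨d, hd, rfl | rfl⟩ := hl x List.mem_cons_self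
    · exact ⟨d * a, b, by rw [List.prod_cons, hab, map_mul, mul_assoc],
        hΔ.isGarsideEltIn_top.mul_ldvd_pow_succ isSpecial_top (hΔ.mem_factors_iff.mp hd) ha⟩
    · obtain ⟨y, -, hy⟩ :=
        hΔ.isGarsideEltIn_top.exists_mul_pow_eq_pow_mul isSpecial_top (x := d) trivial l.length
      obtain ⟨w, hw⟩ := ha
      have h : κ a * κ (w * y) = κ d * κ (Δ ^ l.length) := by
        rw [← map_mul, ← map_mul, hy, hw, mul_assoc]
      refine ⟨Δ ^ l.length, b * (w * y), ?_, ⟨Δ, pow_succ Δ _⟩⟩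
      calc ((κ d)⁻¹ :: l).prod = (κ d)⁻¹ * (κ a * κ (w * y)) * (κ b * κ (w * y))⁻¹ := by
            rw [List.prod_cons, hab]; group
        _ = κ (Δ ^ l.length) * (κ (b * (w * y)))⁻¹ := by rw [h, map_mul κ b]; group

/-- `N` is closed under `∨_R`, so `q p'⁻¹ = u⁻¹ v` with `u q = v p' = q ∨_R p'` in `N`. -/
theorem exists_eq_inv_mul_of_mem_closure (hM : IsPreGarside M) (hΔ : IsGarsideElt Δ)
    (hN : IsParabolic N) {x : G} (hx : x ∈ Subgroup.closure (κ '' (N : Set M))) :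
    ∃ p ∈ N, ∃ q ∈ N, x = (κ p)⁻¹ * κ q := by
  induction hx using Subgroup.closure_induction with
  | mem _ h =>
    obtain ⟨n, hn, rfl⟩ := h
    exact ⟨1, N.one_mem, n, hn, by simp⟩
  | one => exact ⟨1, N.one_mem, 1, N.one_mem, by simp⟩
  | mul _ _ _ _ hx hy =>
    obtain ⟨p, hp, q, hq, rfl⟩ := hx
    obtain ⟨p', hp', q', hq', rfl⟩ := hy
    obtain ⟨m, hm⟩ := hΔ.exists_isLcmR hM q p'
    have hmN : m ∈ N := hN.2.2 q p' m hq hp' hm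
    obtain ⟨u, hu⟩ := hm.1
    obtain ⟨v, hv⟩ := hm.2.1
    have huv : κ u * κ q = κ v * κ p' := by rw [← map_mul, ← map_mul, ← hu, ← hv]
    refine ⟨u * p, N.mul_mem (hN.1.mem_of_ldvd hmN ⟨q, hu⟩) hp,
      v * q', N.mul_mem (hN.1.mem_of_ldvd hmN ⟨p', hv⟩) hq', ?_⟩
    calc (κ p)⁻¹ * κ q * ((κ p')⁻¹ * κ q')
        = (κ p)⁻¹ * (κ u)⁻¹ * (κ u * κ q) * (κ p')⁻¹ * κ q' := by group
      _ = (κ (u * p))⁻¹ * κ (v * q') := by rw [huv, map_mul, map_mul]; group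
  | inv _ _ hx =>
    obtain ⟨p, hp, q, hq, rfl⟩ := hx
    exact ⟨q, hq, p, hp, by group⟩

/-- Write `x = a₀ z⁻¹ h₁⁻¹ h₂` with `h₁, h₂ ∈ N` and `h₁ z γ = h₂ δ`, so `x = (a₀ γ) δ⁻¹`. Since
`a₀ ∧_R (h₁ z) = 1`, the factor cancelled in the normal form `(a₀ γ) δ⁻¹ = a₂ b₂⁻¹` right-divides
`γ = γ' e`, whence `a₂ = a₀ γ'` and `h₂ b₂ = h₁ z γ'`. -/
theorem leN_of_mem_coset (hM : IsPreGarside M) (hΔ : IsGarsideElt Δ)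
    (hN : IsParabolic N) {a₀ z : M} (hcop : ∀ n ∈ N, RCoprime a₀ (n * z))
    (hz : IsLReduced N z) {x : G}
    (hx : (κ a₀ * (κ z)⁻¹)⁻¹ * x ∈ Subgroup.closure (κ '' (N : Set M))) :
    leN κ N (κ a₀ * (κ z)⁻¹) x := by
  have hnf : NormalForm κ (κ a₀ * (κ z)⁻¹) a₀ z := ⟨rfl, one_mul z ▸ hcop 1 N.one_mem⟩
  obtain ⟨h₁, h₁N, h₂, h₂N, hw⟩ := exists_eq_inv_mul_of_mem_closure hM hΔ hN hx
  obtain ⟨γ, δ, hγδ⟩ := hΔ.exists_common_right_mul (h₁ * z) h₂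
  have hxfrac : x = κ (a₀ * γ) * (κ δ)⁻¹ := by
    have e : κ h₁ * κ z * κ γ = κ h₂ * κ δ := by simp only [← map_mul, hγδ]
    calc x = κ a₀ * (κ z)⁻¹ * ((κ h₁)⁻¹ * κ h₂) := by rw [← hw]; group
      _ = κ a₀ * (κ z)⁻¹ * (κ h₁)⁻¹ * (κ h₂ * κ δ) * (κ δ)⁻¹ := by group
      _ = κ (a₀ * γ) * (κ δ)⁻¹ := by rw [← e, map_mul]; group
  obtain ⟨a₂, b₂, e, hae, hbe, hnfx⟩ := NormalForm.exists_of_eq hM hxfrac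
  have hγ : IsGcdR (a₀ * γ) (h₁ * z * γ) (1 * γ) := (hcop h₁ h₁N).isGcdR_one.mul_right hM γ
  obtain ⟨γ', rfl⟩ : RDvd e γ :=
    one_mul γ ▸ hγ.2.2 e ⟨a₂, hae⟩ ⟨h₂ * b₂, by rw [hγδ, hbe, mul_assoc]⟩
  obtain ⟨D, hD⟩ := hM.exists_isGcdL h₂ h₁
  refine ⟨a₀, z, a₂, b₂, hnf, hnfx, h₁, h₁N, h₂, h₂N, γ', ?_, ?_, D, hD,
    hD.mul_right_of_isLReduced hM hΔ hN h₁N h₂N hz⟩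
  · exact hM.cancel_right (d := e) (by rw [← hae, mul_assoc])
  · exact hM.cancel_right (d := e) (by rw [mul_assoc, ← hbe, ← hγδ]; simp only [mul_assoc])

noncomputable abbrev oreSetTop (hM : IsPreGarside M) (hΔ : IsGarsideElt Δ) :
    OreLocalization.OreSet (⊤ : Submonoid M) where
  ore_right_cancel _ _ _ h := ⟨1, by rw [hM.cancel_right h]⟩
  oreNum r s := (hΔ.exists_common_left_mul hM r s).choose_spec.choose
  oreDenom r s := ⟨(hΔ.exists_common_left_mul hM r s).choose, trivial⟩
  ore_eq r s := (hΔ.exists_common_left_mul hM r s).choose_spec.choose_spec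

end Fractions

section EnvelopingGroup

variable {M : Type} [Monoid M] {G : Type} [Group G] {κ : M →* G} {Δ ΔN : M} {N : Submonoid M}
  {g : G} {a b : M}

/-- `κ` is injective because `M` embeds in the group of units of its Ore localisation. -/
theorem IsEnvelopingGroup.injective (hM : IsPreGarside M) (hΔ : IsGarsideElt Δ)
    (hκ : IsEnvelopingGroup M G κ) : Function.Injective κ := by
  let _ := oreSetTop hM hΔ
  obtain ⟨Φ, hΦ, -⟩ := hκ _ (IsUnit.liftRight OreLocalization.numeratorHom
    fun m => OreLocalization.numerator_isUnit (S := ⊤) ⟨m, Submonoid.mem_top m⟩)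
  intro a b hab
  have h := congrArg (fun g => ((Φ g : (OreLocalization (⊤ : Submonoid M) M)ˣ) :
    OreLocalization (⊤ : Submonoid M) M)) hab
  simp only [← MonoidHom.comp_apply, hΦ, IsUnit.coe_liftRight] at h
  obtain ⟨u, v, h₁, h₂⟩ := OreLocalization.oreDiv_eq_iff.mp h
  have huv : (u : M) = v := by simpa using h₂
  have h₃ : (u : M) * b = v * a := h₁
  rw [← huv] at h₃
  exact (hM.cancel_left h₃).symm

theorem IsEnvelopingGroup.closure_range (hκ : IsEnvelopingGroup M G κ) :
    Subgroup.closure (Set.range κ) = ⊤ := by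
  set H := Subgroup.closure (Set.range κ)
  obtain ⟨Φ, hΦ, -⟩ := hκ H (κ.codRestrict H fun x => Subgroup.subset_closure ⟨x, rfl⟩)
  obtain ⟨_, -, huniq⟩ := hκ G κ
  have hid : H.subtype.comp Φ = MonoidHom.id G :=
    (huniq _ (by simp only [MonoidHom.comp_assoc, hΦ]; rfl)).trans (huniq _ rfl).symm
  refine eq_top_iff.mpr fun g _ => ?_
  rw [← MonoidHom.id_apply G g, ← hid]
  exact (Φ g).2

theorem IsEnvelopingGroup.exists_eq_mul_inv (hΔ : IsGarsideElt Δ) (hκ : IsEnvelopingGroup M G κ)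
    (g : G) : ∃ a b, g = κ a * (κ b)⁻¹ := by
  have hg : g ∈ Subgroup.closure (Set.range κ) := hκ.closure_range ▸ Subgroup.mem_top g
  induction hg using Subgroup.closure_induction with
  | mem _ h =>
    obtain ⟨a, rfl⟩ := h
    exact ⟨a, 1, by simp⟩
  | one => exact ⟨1, 1, by simp⟩
  | mul _ _ _ _ hx hy =>
    obtain ⟨a, b, rfl⟩ := hx
    obtain ⟨c, d, rfl⟩ := hy
    obtain ⟨u, v, huv⟩ := hΔ.exists_common_right_mul b c
    have h : (κ b)⁻¹ * κ c = κ u * (κ v)⁻¹ := by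
      rw [inv_mul_eq_iff_eq_mul, ← mul_assoc, eq_mul_inv_iff_mul_eq, ← map_mul, ← map_mul, huv]
    refine ⟨a * u, d * v, ?_⟩
    calc κ a * (κ b)⁻¹ * (κ c * (κ d)⁻¹) = κ a * ((κ b)⁻¹ * κ c) * (κ d)⁻¹ := by group
      _ = κ (a * u) * (κ (d * v))⁻¹ := by rw [h, map_mul, map_mul]; group
  | inv _ _ hx =>
    obtain ⟨a, b, rfl⟩ := hx
    exact ⟨b, a, by group⟩

theorem IsEnvelopingGroup.exists_mul_eq_of_mul_inv_eq (hM : IsPreGarside M)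
    (hΔ : IsGarsideElt Δ) (hκ : IsEnvelopingGroup M G κ) {a b c d : M}
    (h : κ a * (κ b)⁻¹ = κ c * (κ d)⁻¹) : ∃ u v, a * u = c * v ∧ b * u = d * v := by
  obtain ⟨u, v, huv⟩ := hΔ.exists_common_right_mul b d
  refine ⟨u, v, hκ.injective hM hΔ ?_, huv⟩
  calc κ (a * u) = κ a * (κ b)⁻¹ * κ (b * u) := by rw [map_mul, map_mul]; group
    _ = κ c * (κ d)⁻¹ * κ (d * v) := by rw [h, huv]
    _ = κ (c * v) := by rw [map_mul, map_mul]; group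

theorem IsEnvelopingGroup.mem_closure_image_factors (hΔ : IsGarsideElt Δ)
    (hκ : IsEnvelopingGroup M G κ) (g : G) : g ∈ Subgroup.closure (κ '' Factors Δ) := by
  have hrange : Set.range κ ⊆ Subgroup.closure (κ '' Factors Δ) := by
    rintro _ ⟨x, rfl⟩
    have hx : κ x ∈ (Submonoid.closure (Factors Δ)).map κ := ⟨x, hΔ.2 ▸ trivial, rfl⟩
    rw [MonoidHom.map_mclosure] at hx
    exact Subgroup.le_closure_toSubmonoid _ hx
  exact Subgroup.closure_le _ |>.mpr hrange (hκ.closure_range ▸ Subgroup.mem_top g)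

theorem IsEnvelopingGroup.exists_list_lenSimple (hΔ : IsGarsideElt Δ)
    (hκ : IsEnvelopingGroup M G κ) (g : G) :
    ∃ l : List G, l.length = lenSimple κ Δ g ∧
      (∀ x ∈ l, ∃ d ∈ Factors Δ, x = κ d ∨ x = (κ d)⁻¹) ∧ l.prod = g := by
  refine Nat.sInf_mem (s := {k | ∃ l : List G, l.length = k ∧
    (∀ x ∈ l, ∃ d ∈ Factors Δ, x = κ d ∨ x = (κ d)⁻¹) ∧ l.prod = g}) ?_
  have hg := hκ.mem_closure_image_factors hΔ g
  rw [← Subgroup.mem_toSubmonoid, Subgroup.closure_toSubmonoid] at hg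
  obtain ⟨l, hl, rfl⟩ := Submonoid.exists_list_of_mem_closure hg
  refine ⟨l.length, l, rfl, fun x hx => ?_, rfl⟩
  rcases hl x hx with ⟨d, hd, rfl⟩ | ⟨d, hd, hdx⟩
  · exact ⟨d, hd, Or.inl rfl⟩
  · exact ⟨d, hd, Or.inr (by rw [hdx, inv_inv])⟩

theorem NormalForm.exists_mul_of_eq (hM : IsPreGarside M) (hΔ : IsGarsideElt Δ)
    (hκ : IsEnvelopingGroup M G κ) (hnf : NormalForm κ g a b) {a' b' : M}
    (h : g = κ a' * (κ b')⁻¹) : ∃ e, a' = a * e ∧ b' = b * e := by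
  obtain ⟨u, v, hau, hbu⟩ := hκ.exists_mul_eq_of_mul_inv_eq hM hΔ (h.symm.trans hnf.1)
  obtain ⟨e, he⟩ := hM.exists_isGcdR a' b'
  obtain ⟨a₁, ha₁⟩ := he.1
  obtain ⟨b₁, hb₁⟩ := he.2.1
  have hv : e * u = v := by
    have h₁ := he.mul_right hM u
    have h₂ := RCoprime.isGcdR_one hnf.2 |>.mul_right hM v
    rw [hau, hbu] at h₁
    rw [one_mul] at h₂
    exact h₁.unique hM h₂
  have ha : a₁ = a := hM.cancel_right (d := e * u) (by rw [← mul_assoc, ← ha₁, hau, hv])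
  have hb : b₁ = b := hM.cancel_right (d := e * u) (by rw [← mul_assoc, ← hb₁, hbu, hv])
  exact ⟨e, ha ▸ ha₁, hb ▸ hb₁⟩

theorem NormalForm.unique (hM : IsPreGarside M) (hΔ : IsGarsideElt Δ)
    (hκ : IsEnvelopingGroup M G κ) {c d : M} (h₁ : NormalForm κ g a b)
    (h₂ : NormalForm κ g c d) : a = c ∧ b = d := by
  obtain ⟨e, rfl, rfl⟩ := h₁.exists_mul_of_eq hM hΔ hκ h₂.1
  rw [h₂.2 e (RDvd.mul_left e a) (RDvd.mul_left e b), mul_one, mul_one]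
  exact ⟨rfl, rfl⟩

theorem NormalForm.ldvd_pow_lenSimple (hM : IsPreGarside M) (hΔ : IsGarsideElt Δ)
    (hκ : IsEnvelopingGroup M G κ) (hnf : NormalForm κ g a b) :
    LDvd a (Δ ^ lenSimple κ Δ g) := by
  obtain ⟨l, hlen, hl, rfl⟩ := hκ.exists_list_lenSimple hΔ g
  obtain ⟨a', b', hab', ha'⟩ := exists_eq_mul_inv_ldvd_pow_length hΔ l hl
  obtain ⟨e, rfl, -⟩ := hnf.exists_mul_of_eq hM hΔ hκ hab'
  exact hlen ▸ (LDvd.mul_right a e).trans ha'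

theorem leN_antisymm (hM : IsPreGarside M) (hΔ : IsGarsideElt Δ) (hκ : IsEnvelopingGroup M G κ)
    {x y : G} (hxy : leN κ N x y) (hyx : leN κ N y x) : x = y := by
  obtain ⟨a₁, b₁, a₂, b₂, nfx, nfy, h₁, -, h₂, -, α, hα, hb, D, hD, hD'⟩ := hxy
  obtain ⟨a₂', b₂', a₁', b₁', nfy', nfx', k₁, -, k₂, -, β, hβ, hb', E, hE, hE'⟩ := hyx
  obtain ⟨rfl, rfl⟩ := NormalForm.unique hM hΔ hκ nfy nfy'
  obtain ⟨rfl, rfl⟩ := NormalForm.unique hM hΔ hκ nfx nfx'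
  have hα1 : α = 1 := hM.eq_one_of_mul_ldvd ⟨β, by rw [← hα, hβ]⟩
  have hβ1 : β = 1 := hM.eq_one_of_mul_ldvd ⟨α, by rw [← hβ, hα]⟩
  subst hα1 hβ1
  rw [mul_one] at hα hb hb'
  have hb₁₂ : b₁ = b₂ := hM.rdvd_antisymm (rdvd_of_mul_eq_mul_of_isGcdL hM hb hD hD')
    (rdvd_of_mul_eq_mul_of_isGcdL hM hb' hE hE')
  rw [nfx.1, nfy.1, hα, hb₁₂]

theorem exists_phiSpec_le (hM : IsPreGarside M) (hΔ : IsGarsideElt Δ) (hN : IsParabolic N)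
    (hΔN : IsGarsideEltIn N ΔN) (hdiv : FactorsIn N ΔN = Factors Δ ∩ (N : Set M))
    (hκ : IsEnvelopingGroup M G κ) (g : G) :
    ∃ m, PhiSpec κ Δ ΔN g (ΔN ^ lenSimple κ Δ g) m ∧
      g⁻¹ * m ∈ Subgroup.closure (κ '' (N : Set M)) ∧
      ∀ x, g⁻¹ * x ∈ Subgroup.closure (κ '' (N : Set M)) → leN κ N m x := by
  set K := lenSimple κ Δ g
  obtain ⟨p, q, hpq⟩ := hκ.exists_eq_mul_inv hΔ g
  obtain ⟨a, b, -, -, -, hnf⟩ := NormalForm.exists_of_eq hM hpq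
  obtain ⟨c, hc⟩ := hM.exists_isGcdR a (ΔN ^ K * b)
  obtain ⟨a₀, ha₀⟩ := hc.1
  obtain ⟨y, hy⟩ := hc.2.1
  obtain ⟨d, hd⟩ := hM.exists_isGcdL y (ΔN ^ lenFactors Δ y)
  obtain ⟨z, hz⟩ := hd.1
  have hdN : d ∈ N := hN.1.mem_of_ldvd (N.pow_mem hΔN.1 _) hd.2.1
  have hcop := rCoprime_mul_of_isGcdR hM hN.1 hΔ hΔN hdiv (hnf.ldvd_pow_lenSimple hM hΔ hκ) hc
    ha₀ (by rw [hy, hz]) hdN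
  have hred := isLReduced_of_isGcdL_powN hM hN.1 hΔ hΔN hdiv (hΔ.ldvd_pow_lenFactors y) hd hz
  have hmem : g⁻¹ * (κ a₀ * (κ z)⁻¹) = (κ (ΔN ^ K))⁻¹ * κ d := by
    have e : κ (ΔN ^ K) * κ b = κ d * κ z * κ c := by simp only [← map_mul, hy, hz]
    calc g⁻¹ * (κ a₀ * (κ z)⁻¹)
        = (κ (ΔN ^ K))⁻¹ * (κ (ΔN ^ K) * κ b) * (κ c)⁻¹ * (κ z)⁻¹ := by
          rw [hnf.1, ha₀, map_mul]; group
      _ = (κ (ΔN ^ K))⁻¹ * κ d := by rw [e]; group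
  have hmemN : g⁻¹ * (κ a₀ * (κ z)⁻¹) ∈ Subgroup.closure (κ '' (N : Set M)) := by
    rw [hmem]
    exact mul_mem (inv_mem (Subgroup.subset_closure ⟨_, N.pow_mem hΔN.1 K, rfl⟩))
      (Subgroup.subset_closure ⟨d, hdN, rfl⟩)
  refine ⟨κ a₀ * (κ z)⁻¹, ⟨a, b, c, y, d, z, hnf, hc, hy, hd, hz, by rw [ha₀, map_mul]; group⟩,
    hmemN, fun x hx => leN_of_mem_coset hM hΔ hN hcop hred ?_⟩
  rw [show (κ a₀ * (κ z)⁻¹)⁻¹ * x = (g⁻¹ * (κ a₀ * (κ z)⁻¹))⁻¹ * (g⁻¹ * x) by group]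
  exact mul_mem (inv_mem hmemN) hx

end EnvelopingGroup

/-- **Theorem 4.4 (4).** For a Garside monoid `M` with Garside element `Δ`, a parabolic
submonoid `N` with Garside element `Δ_N` satisfying `Div Δ_N = Div Δ ∩ N`: every left
coset `g G(N)` has a unique minimal element `m_N(g)` for `≤_N`, and moreover
`m_N(g) = φ_g(Δ_N^{|g|})`. -/
theorem theorem_4_4_minimal {M : Type} [Monoid M] (hM : IsPreGarside M) (Δ : M)
    (hΔ : IsGarsideElt Δ) (N : Submonoid M) (hN : IsParabolic N) (ΔN : M)
    (hΔN : IsGarsideEltIn N ΔN) (hdiv : FactorsIn N ΔN = Factors Δ ∩ (N : Set M))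
    {G : Type} [Group G] (κ : M →* G) (hκ : IsEnvelopingGroup M G κ) :
    ∀ g : G,
      (∃! m : G, g⁻¹ * m ∈ Subgroup.closure (κ '' (N : Set M)) ∧
        ∀ x : G, g⁻¹ * x ∈ Subgroup.closure (κ '' (N : Set M)) → leN κ N x m → x = m) ∧
      ∀ m : G, (g⁻¹ * m ∈ Subgroup.closure (κ '' (N : Set M)) ∧
          ∀ x : G, g⁻¹ * x ∈ Subgroup.closure (κ '' (N : Set M)) → leN κ N x m → x = m) →
        PhiSpec κ Δ ΔN g (ΔN ^ lenSimple κ Δ g) m := by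
  intro g
  obtain ⟨m, hφ, hmN, hle⟩ := exists_phiSpec_le hM hΔ hN hΔN hdiv hκ g
  have hmin : ∀ m', (g⁻¹ * m' ∈ Subgroup.closure (κ '' (N : Set M)) ∧
      ∀ x, g⁻¹ * x ∈ Subgroup.closure (κ '' (N : Set M)) → leN κ N x m' → x = m') → m' = m :=
    fun m' hm' => (hm'.2 m hmN (hle m' hm'.1)).symm
  exact ⟨⟨m, ⟨hmN, fun x hx hxm => leN_antisymm hM hΔ hκ hxm (hle x hx)⟩, hmin⟩,
    fun m' hm' => hmin m' hm' ▸ hφ⟩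

end PG
end
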